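/- arXiv:2507.08259 — 2 statements merged into one kernel-verified Lean document; each statement's English description precedes it below -/
import Mathlib

section
/- Let m, L, q ∈ ℕ with m ≥ 1 and L ≥ m. Let Φ ∈ ℝ^{m×L} have full row rank (rank Φ = m), let Y ∈ ℝ^{q×L}, let θ := Y Φᵀ (Φ Φᵀ)⁻¹ be the least-squares solution of min_θ ‖Y − θΦ‖_F, let E := Y − θΦ be the residual matrix, and let φ ∈ ℝ^m be arbitrary. Then the prediction set {Y g : g ∈ ℝ^L, Φ g = φ} equals the singleton {θ φ} if and only if E ĝ = 0 for every ĝ ∈ ℝ^L with Φ ĝ = 0. -/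
/-- Lemma 2 (equivalence of the NLS prediction model and the NPV-DeePC prediction set):
Let `Φ ∈ ℝ^{m×L}` have full row rank, `Y ∈ ℝ^{q×L}`, `θ := Y Φᵀ (Φ Φᵀ)⁻¹` the
least-squares solution, `E := Y − θΦ` the residual matrix, and `φ ∈ ℝ^m` arbitrary.
Then `{Y g : Φ g = φ} = {θ φ}` iff `E ghat = 0` for every `ghat` with `Φ ghat = 0`. -/
theorem npv_deepc_equivalence
    (m L q : ℕ) (hm : 1 ≤ m) (hL : m ≤ L)
    (Φ : Matrix (Fin m) (Fin L) ℝ) (hrank : Φ.rank = m)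
    (Y : Matrix (Fin q) (Fin L) ℝ)
    (θ : Matrix (Fin q) (Fin m) ℝ) (hθ : θ = Y * Φ.transpose * (Φ * Φ.transpose)⁻¹)
    (E : Matrix (Fin q) (Fin L) ℝ) (hE : E = Y - θ * Φ)
    (fv : Fin m → ℝ) :
    {v : Fin q → ℝ | ∃ g : Fin L → ℝ, Φ.mulVec g = fv ∧ v = Y.mulVec g}
      = {θ.mulVec fv}
    ↔ ∀ ghat : Fin L → ℝ, Φ.mulVec ghat = 0 → E.mulVec ghat = 0 := by
  -- Φ Φᵀ is invertible
  have hrank2 : (Φ * Φ.transpose).rank = m := by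
    rw [Matrix.rank_self_mul_transpose]; exact hrank
  have hunit : IsUnit (Φ * Φ.transpose) := by
    rw [← Matrix.mulVec_surjective_iff_isUnit]
    have : LinearMap.range (Φ * Φ.transpose).mulVecLin = ⊤ := by
      apply Submodule.eq_top_of_finrank_eq
      rw [← Matrix.rank, hrank2]
      simp [Module.finrank_pi]
    intro v
    have : v ∈ LinearMap.range (Φ * Φ.transpose).mulVecLin := by rw [this]; trivial
    obtain ⟨g, hg⟩ := this
    exact ⟨g, hg⟩
  have hdet : IsUnit (Φ * Φ.transpose).det := (Matrix.isUnit_iff_isUnit_det _).mp hunit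
  have hinv1 : (Φ * Φ.transpose) * (Φ * Φ.transpose)⁻¹ = 1 := Matrix.mul_nonsing_inv _ hdet
  have hinv2 : (Φ * Φ.transpose)⁻¹ * (Φ * Φ.transpose) = 1 := Matrix.nonsing_inv_mul _ hdet
  -- E Φᵀ = 0
  have hEΦT : E * Φ.transpose = 0 := by
    rw [hE, hθ, Matrix.sub_mul]
    rw [Matrix.mul_assoc (Y * Φ.transpose * (Φ * Φ.transpose)⁻¹) Φ Φ.transpose]
    rw [Matrix.mul_assoc (Y * Φ.transpose) ((Φ * Φ.transpose)⁻¹) (Φ * Φ.transpose), hinv2]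
    simp
  -- the particular solution g0
  set g0 : Fin L → ℝ := (Φ.transpose * (Φ * Φ.transpose)⁻¹).mulVec fv with hg0
  have hΦg0 : Φ.mulVec g0 = fv := by
    rw [hg0, Matrix.mulVec_mulVec, ← Matrix.mul_assoc, hinv1]
    simp
  have hEg0 : E.mulVec g0 = 0 := by
    rw [hg0, Matrix.mulVec_mulVec, ← Matrix.mul_assoc, hEΦT]
    simp
  -- Y g = θ (Φ g) + E g
  have hYg : ∀ g : Fin L → ℝ, Y.mulVec g = θ.mulVec (Φ.mulVec g) + E.mulVec g := by
    intro g
    rw [hE, Matrix.sub_mulVec, Matrix.mulVec_mulVec]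
    abel
  have hYg0 : Y.mulVec g0 = θ.mulVec fv := by
    rw [hYg g0, hΦg0, hEg0, add_zero]
  constructor
  · intro hset ghat hΦghat
    have h1 : Y.mulVec (g0 + ghat) ∈ {v : Fin q → ℝ | ∃ g, Φ.mulVec g = fv ∧ v = Y.mulVec g} :=
      ⟨g0 + ghat, by rw [Matrix.mulVec_add, hΦg0, hΦghat, add_zero], rfl⟩
    rw [hset, Set.mem_singleton_iff] at h1
    have h2 : E.mulVec ghat = Y.mulVec ghat := by
      rw [hYg ghat, hΦghat, Matrix.mulVec_zero, zero_add]
    rw [h2]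
    rw [Matrix.mulVec_add, hYg0] at h1
    have h3 : Y.mulVec ghat = θ.mulVec fv - θ.mulVec fv := by
      nth_rewrite 1 [← h1]; abel
    simpa using h3
  · intro hker
    ext v
    simp only [Set.mem_setOf_eq, Set.mem_singleton_iff]
    constructor
    · rintro ⟨g, hg, rfl⟩
      have hdiff : Φ.mulVec (g - g0) = 0 := by
        rw [Matrix.mulVec_sub, hg, hΦg0, sub_self]
      have hE' := hker _ hdiff
      rw [Matrix.mulVec_sub, hEg0, sub_zero] at hE'
      rw [hYg g, hg, hE', add_zero]
    · rintro rfl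
      exact ⟨g0, hΦg0, hYg0.symm⟩
end

section
/- (Willems' fundamental lemma.) Let n, n_u, n_y, L, D ∈ ℕ with n_u ≥ 1, D ≥ 1 and L ≥ D + n. Consider the linear time-invariant system x(k+1) = A x(k) + B u(k), y(k) = C x(k) + D₀ u(k) with A ∈ ℝ^{n×n}, B ∈ ℝ^{n×n_u}, C ∈ ℝ^{n_y×n}, D₀ ∈ ℝ^{n_y×n_u}, and assume the pair (A,B) is controllable, i.e., the controllability matrix [B, AB, …, A^{n−1}B] has rank n. Let û(0),…,û(L−1) ∈ ℝ^{n_u} and ŷ(0),…,ŷ(L−1) ∈ ℝ^{n_y} be such that there exists a state sequence x̂(0),…,x̂(L) with x̂(k+1) = A x̂(k) + B û(k) and ŷ(k) = C x̂(k) + D₀ û(k) for all k = 0,…,L−1, and suppose û is persistently exciting of order D + n, i.e., the Hankel matrix H_{D+n}(û) ∈ ℝ^{n_u(D+n) × (L−D−n+1)} has full row rank. Then a pair of sequences ũ(0),…,ũ(D−1) ∈ ℝ^{n_u}, ỹ(0),…,ỹ(D−1) ∈ ℝ^{n_y} is a trajectory of the system (i.e., there exists x̃(0),…,x̃(D) with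 x̃(k+1) = A x̃(k) + B ũ(k) and ỹ(k) = C x̃(k) + D₀ ũ(k) for k = 0,…,D−1) if and only if there exists g ∈ ℝ^{L−D+1} such that H_D(û) g = col(ũ(0),…,ũ(D−1)) and H_D(ŷ) g = col(ỹ(0),…,ỹ(D−1)). -/
/-- The Hankel matrix of depth `D` of a vector-valued sequence `z(0), …, z(L-1)`,
with block-row index `i : Fin D`, within-block index `r : Fin nz`, and column
index `j : Fin (L - D + 1)`; its `((i, r), j)` entry is the `r`-th component
of `z (i + j)`. -/
def hankelMatrix (nz D L : ℕ) (z : ℕ → Fin nz → ℝ) :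
    Matrix (Fin D × Fin nz) (Fin (L - D + 1)) ℝ :=
  fun p j => z (p.1.1 + j.1) p.2

/-- `(u, y)` (given as `ℕ`-indexed sequences) is a length-`T` input/output trajectory
of the LTI system `x⁺ = A x + B u`, `y = C x + D₀ u`. -/
def IsTrajectory {n nu ny : ℕ}
    (A : Matrix (Fin n) (Fin n) ℝ) (B : Matrix (Fin n) (Fin nu) ℝ)
    (C : Matrix (Fin ny) (Fin n) ℝ) (D₀ : Matrix (Fin ny) (Fin nu) ℝ)
    (T : ℕ) (u : ℕ → Fin nu → ℝ) (y : ℕ → Fin ny → ℝ) : Prop :=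
  ∃ x : ℕ → Fin n → ℝ, ∀ k < T,
    x (k + 1) = A.mulVec (x k) + B.mulVec (u k) ∧
    y k = C.mulVec (x k) + D₀.mulVec (u k)

/-- The pair `(A, B)` is controllable: the controllability matrix
`[B, AB, …, A^{n−1}B]` has rank `n`. -/
def IsControllable {n nu : ℕ}
    (A : Matrix (Fin n) (Fin n) ℝ) (B : Matrix (Fin n) (Fin nu) ℝ) : Prop :=
  (Matrix.of fun (r : Fin n) (p : Fin n × Fin nu) =>
    (A ^ (p.1 : ℕ) * B) r p.2).rank = n

/-!
Let `x̂` be the state of the data. The matrix `[H₁(x̂); H_D(û)]`, cut to `L - D + 1` columns,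
has full row rank. Indeed, let `(ξ, η)` annihilate it. Running the recursion
`x̂(k+1) = A x̂(k) + B û(k)` forward `i ≤ n` steps turns `(ξ, η)` into the functional
`(ξ Aⁱ, [ξ Aⁱ⁻¹B, …, ξ B, η])` on the data shifted by `i`; weighting these by the coefficients
of the characteristic polynomial of `A` removes the state part (Cayley–Hamilton). What is left
annihilates `H_{D+n}(û)`, so it vanishes by persistency of excitation. Read as a backward
recurrence with leading coefficient `1`, this forces `η = 0` and `ξ A^q B = 0` for `q < n`,
hence `ξ = 0` by controllability.

So any initial state and input can be matched by a combination `g` of the shifted data. That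
combination is again a trajectory, so by determinism its output is `ỹ`. Conversely, every such
combination is a trajectory.
-/

open Matrix Finset

namespace Matrix

variable {K m n : Type*} [Field K] [Fintype m] [Fintype n]

theorem vecMul_injective_of_rank_eq_card {M : Matrix m n K} (h : M.rank = Fintype.card m) :
    Function.Injective M.vecMul := by
  rw [vecMul_injective_iff, linearIndependent_iff_card_eq_finrank_span, ← h]
  exact M.rank_eq_finrank_span_row

theorem mulVec_surjective_of_vecMul_eq_zero {M : Matrix m n K}
    (h : ∀ w : m → K, w ᵥ* M = 0 → w = 0) : Function.Surjective M.mulVec := by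
  have hinj : Function.Injective M.vecMul := fun a b hab =>
    sub_eq_zero.mp (h _ (by rw [sub_vecMul]; exact sub_eq_zero.mpr hab))
  have hrange : LinearMap.range M.mulVecLin = ⊤ := Submodule.eq_top_of_finrank_eq <| by
    rw [Module.finrank_fintype_fun_eq_card]
    exact (vecMul_injective_iff.mp hinj).rank_matrix
  exact LinearMap.range_eq_top.mp hrange

end Matrix

theorem eq_zero_of_backward_recurrence {R V : Type*} [Ring R] [AddCommGroup V] [Module R V]
    {n K : ℕ} {c : ℕ → R} (hc : c n = 1) {e : ℕ → V} (htail : ∀ p ≥ K, e p = 0)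
    (hrec : ∀ m < K, ∑ i ∈ range (n + 1), c i • e (m + n - i) = 0) (p : ℕ) : e p = 0 := by
  induction hd : K - p using Nat.strong_induction_on generalizing p with
  | _ d ih =>
    rcases le_or_gt K p with hp | hp
    · exact htail p hp
    · -- every other term of the recurrence at `p` has a larger index
      have hlater : ∀ i ∈ range n, c i • e (p + n - i) = 0 := fun i hi => by
        rw [ih (K - (p + n - i)) (by rw [mem_range] at hi; omega) _ rfl, smul_zero]
      simpa [sum_range_succ, hc, sum_eq_zero hlater] using hrec p hp

theorem IsControllable.eq_zero_of_forall_vecMul_pow_mul_eq_zero {n nu : ℕ}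
    {A : Matrix (Fin n) (Fin n) ℝ} {B : Matrix (Fin n) (Fin nu) ℝ} (h : IsControllable A B)
    {ξ : Fin n → ℝ} (hξ : ∀ q < n, ξ ᵥ* (A ^ q * B) = 0) : ξ = 0 := by
  refine vecMul_injective_of_rank_eq_card (by rw [Fintype.card_fin]; exact h) ?_
  ext ⟨q, r⟩
  simpa [vecMul, dotProduct] using congrFun (hξ q q.isLt) r

def IsPersistentlyExciting (nz N L : ℕ) (z : ℕ → Fin nz → ℝ) : Prop :=
  (hankelMatrix nz N L z).rank = nz * N

def shiftCombination {V : Type*} [AddCommMonoid V] [Module ℝ V] {M : ℕ} (g : Fin M → ℝ)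
    (z : ℕ → V) (k : ℕ) : V :=
  ∑ j, g j • z (k + j)

section Hankel

variable {nz D L : ℕ} (z : ℕ → Fin nz → ℝ)

theorem hankelMatrix_mulVec_eq_iff (g : Fin (L - D + 1) → ℝ) (w : ℕ → Fin nz → ℝ) :
    hankelMatrix nz D L z *ᵥ g = (fun p : Fin D × Fin nz => w p.1.1 p.2) ↔
      ∀ k < D, shiftCombination g z k = w k := by
  have hentry : ∀ (k : Fin D) (r : Fin nz),
      (hankelMatrix nz D L z *ᵥ g) (k, r) = shiftCombination g z k r := by
    intro k r
    simp [hankelMatrix, shiftCombination, mulVec, dotProduct, mul_comm]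
  constructor
  · intro h k hk
    ext r
    rw [← hentry ⟨k, hk⟩ r, h]
  · intro h
    ext ⟨k, r⟩
    rw [hentry, h k k.isLt]

theorem vecMul_hankelMatrix (η : ℕ → Fin nz → ℝ) :
    (fun p : Fin D × Fin nz => η p.1.1 p.2) ᵥ* hankelMatrix nz D L z =
      fun j : Fin (L - D + 1) => ∑ k ∈ range D, η k ⬝ᵥ z (k + j) := by
  ext j
  rw [← Fin.sum_univ_eq_sum_range (fun k => η k ⬝ᵥ z (k + j))]
  simp [vecMul, dotProduct, hankelMatrix, Fintype.sum_prod_type]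

variable {z} in
theorem IsPersistentlyExciting.eq_zero (h : IsPersistentlyExciting nz D L z)
    {η : ℕ → Fin nz → ℝ} (hη : ∀ j ≤ L - D, ∑ k ∈ range D, η k ⬝ᵥ z (k + j) = 0) :
    ∀ k < D, η k = 0 := by
  have hrank : (hankelMatrix nz D L z).rank = Fintype.card (Fin D × Fin nz) := by
    rw [Fintype.card_prod, Fintype.card_fin, Fintype.card_fin, mul_comm]
    exact h
  have hzero : (fun p : Fin D × Fin nz => η p.1.1 p.2) = 0 := by
    refine vecMul_injective_of_rank_eq_card hrank ?_
    change _ ᵥ* _ = 0 ᵥ* _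
    rw [vecMul_hankelMatrix, zero_vecMul]
    ext j
    exact hη j (by omega)
  intro k hk
  ext r
  exact congrFun hzero (⟨k, hk⟩, r)

end Hankel

def IsStateTrajectory {n nu ny : ℕ} (A : Matrix (Fin n) (Fin n) ℝ)
    (B : Matrix (Fin n) (Fin nu) ℝ) (C : Matrix (Fin ny) (Fin n) ℝ)
    (D₀ : Matrix (Fin ny) (Fin nu) ℝ) (T : ℕ)
    (x : ℕ → Fin n → ℝ) (u : ℕ → Fin nu → ℝ) (y : ℕ → Fin ny → ℝ) : Prop :=
  ∀ k < T, x (k + 1) = A *ᵥ x k + B *ᵥ u k ∧ y k = C *ᵥ x k + D₀ *ᵥ u k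

section IsStateTrajectory

variable {n nu ny : ℕ} {A : Matrix (Fin n) (Fin n) ℝ} {B : Matrix (Fin n) (Fin nu) ℝ}
  {C : Matrix (Fin ny) (Fin n) ℝ} {D₀ : Matrix (Fin ny) (Fin nu) ℝ}

theorem IsStateTrajectory.shiftCombination {L D M : ℕ} {x : ℕ → Fin n → ℝ}
    {u : ℕ → Fin nu → ℝ} {y : ℕ → Fin ny → ℝ} (h : IsStateTrajectory A B C D₀ L x u y)
    (hM : D + M ≤ L + 1) (g : Fin M → ℝ) :
    IsStateTrajectory A B C D₀ D (shiftCombination g x) (shiftCombination g u)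
      (shiftCombination g y) := by
  intro k hk
  simp only [_root_.shiftCombination, mulVec_sum, mulVec_smul, ← sum_add_distrib, ← smul_add]
  have hkj : ∀ j : Fin M, k + j < L := fun j => by omega
  constructor
  · exact sum_congr rfl fun j _ => by rw [add_right_comm, (h _ (hkj j)).1]
  · exact sum_congr rfl fun j _ => by rw [(h _ (hkj j)).2]

theorem IsStateTrajectory.output_eq {T : ℕ} {x x' : ℕ → Fin n → ℝ} {u u' : ℕ → Fin nu → ℝ}
    {y y' : ℕ → Fin ny → ℝ} (h : IsStateTrajectory A B C D₀ T x u y)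
    (h' : IsStateTrajectory A B C D₀ T x' u' y') (hx₀ : x 0 = x' 0)
    (hu : ∀ k < T, u k = u' k) : ∀ k < T, y k = y' k := by
  have hx : ∀ k ≤ T, x k = x' k := by
    intro k hk
    induction k with
    | zero => exact hx₀
    | succ k ih => rw [(h k hk).1, (h' k hk).1, ih (by omega), hu k hk]
  intro k hk
  rw [(h k hk).2, (h' k hk).2, hx k hk.le, hu k hk]

end IsStateTrajectory

section StateSpace

variable {n nu L : ℕ} {A : Matrix (Fin n) (Fin n) ℝ} {B : Matrix (Fin n) (Fin nu) ℝ}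
  {x : ℕ → Fin n → ℝ} {u : ℕ → Fin nu → ℝ}

theorem dotProduct_state_add (hx : ∀ k < L, x (k + 1) = A *ᵥ x k + B *ᵥ u k)
    (ξ : Fin n → ℝ) (i : ℕ) :
    ∀ j, j + i ≤ L → ξ ⬝ᵥ x (j + i) =
      (ξ ᵥ* A ^ i) ⬝ᵥ x j + ∑ t ∈ range i, (ξ ᵥ* (A ^ (i - 1 - t) * B)) ⬝ᵥ u (j + t) := by
  induction i with
  | zero => intro j _; simp
  | succ i ih =>
    intro j hj
    rw [show j + (i + 1) = j + 1 + i by omega, ih (j + 1) (by omega), hx j (by omega),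
      dotProduct_add, dotProduct_mulVec, dotProduct_mulVec, vecMul_vecMul, vecMul_vecMul,
      ← pow_succ, sum_range_succ', add_assoc]
    congr 1
    rw [add_comm]
    congr 1
    exact sum_congr rfl fun t _ => by
      rw [show i + 1 - 1 - (t + 1) = i - 1 - t by omega, add_right_comm, add_assoc]

/-- The row `[ξ Aⁿ⁻¹B, …, ξ B, η]`; its part from block `n - i` on holds the input coefficients of
`(ξ, η)` shifted `i` steps along a trajectory. -/
def extendedCoeffs (A : Matrix (Fin n) (Fin n) ℝ) (B : Matrix (Fin n) (Fin nu) ℝ)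
    (ξ : Fin n → ℝ) (η : ℕ → Fin nu → ℝ) (p : ℕ) : Fin nu → ℝ :=
  if p < n then ξ ᵥ* (A ^ (n - 1 - p) * B) else η (p - n)

theorem dotProduct_state_add_sum_eq_extendedCoeffs (hx : ∀ k < L, x (k + 1) = A *ᵥ x k + B *ᵥ u k)
    (ξ : Fin n → ℝ) {N : ℕ} {η : ℕ → Fin nu → ℝ} (hη : ∀ k ≥ N, η k = 0) {i j : ℕ}
    (hi : i ≤ n) (hij : j + i ≤ L) :
    ξ ⬝ᵥ x (j + i) + ∑ k ∈ range N, η k ⬝ᵥ u (k + (j + i)) =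
      (ξ ᵥ* A ^ i) ⬝ᵥ x j +
        ∑ m ∈ range (N + n), extendedCoeffs A B ξ η (m + n - i) ⬝ᵥ u (m + j) := by
  have h₁ : ∑ t ∈ range i, (ξ ᵥ* (A ^ (i - 1 - t) * B)) ⬝ᵥ u (j + t) =
      ∑ t ∈ range i, extendedCoeffs A B ξ η (t + n - i) ⬝ᵥ u (t + j) :=
    sum_congr rfl fun t ht => by
      rw [mem_range] at ht
      rw [extendedCoeffs, if_pos (by omega), show n - 1 - (t + n - i) = i - 1 - t by omega,
        add_comm j]
  have h₂ : ∑ k ∈ range N, η k ⬝ᵥ u (k + (j + i)) =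
      ∑ k ∈ range N, extendedCoeffs A B ξ η (i + k + n - i) ⬝ᵥ u (i + k + j) :=
    sum_congr rfl fun k _ => by
      rw [extendedCoeffs, if_neg (by omega), show i + k + n - i - n = k by omega,
        show i + k + j = k + (j + i) by omega]
  have h₃ : ∑ k ∈ range (n - i),
      extendedCoeffs A B ξ η (i + (N + k) + n - i) ⬝ᵥ u (i + (N + k) + j) = 0 :=
    sum_eq_zero fun k _ => by
      rw [extendedCoeffs, if_neg (by omega), hη _ (by omega), zero_dotProduct]
  rw [dotProduct_state_add hx ξ i j hij, show N + n = i + (N + (n - i)) by omega, sum_range_add,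
    sum_range_add, h₃, add_zero, h₁, h₂, add_assoc]

theorem eq_zero_of_dotProduct_state_add_sum_eq_zero (hctrb : IsControllable A B)
    (hx : ∀ k < L, x (k + 1) = A *ᵥ x k + B *ᵥ u k) {D : ℕ} (hL : D + n ≤ L)
    (hpe : IsPersistentlyExciting nu (D + n) L u) {ξ : Fin n → ℝ} {η : ℕ → Fin nu → ℝ}
    (hη : ∀ k ≥ D, η k = 0)
    (hw : ∀ j ≤ L - D, ξ ⬝ᵥ x j + ∑ k ∈ range D, η k ⬝ᵥ u (k + j) = 0) :
    ξ = 0 ∧ η = 0 := by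
  set e := extendedCoeffs A B ξ η
  set c := A.charpoly.coeff
  have hmonic : c n = 1 := by
    simpa using A.charpoly_monic.coeff_natDegree
  have hCH : ∑ i ∈ range (n + 1), c i • A ^ i = 0 := by
    simpa [Polynomial.aeval_eq_sum_range] using A.aeval_self_charpoly
  have hker : ∀ j ≤ L - (D + n), ∑ m ∈ range (D + n),
      (∑ i ∈ range (n + 1), c i • e (m + n - i)) ⬝ᵥ u (m + j) = 0 := by
    intro j hj
    calc _ = ∑ i ∈ range (n + 1), c i * ∑ m ∈ range (D + n), e (m + n - i) ⬝ᵥ u (m + j) := by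
          simp only [sum_dotProduct, smul_dotProduct, smul_eq_mul, mul_sum]
          exact sum_comm
      _ = ∑ i ∈ range (n + 1), c i * -((ξ ᵥ* A ^ i) ⬝ᵥ x j) :=
          sum_congr rfl fun i hi => by
            rw [mem_range] at hi
            have h := dotProduct_state_add_sum_eq_extendedCoeffs hx ξ hη (i := i) (j := j)
              (by omega) (by omega)
            rw [hw (j + i) (by omega)] at h
            congr 1
            exact eq_neg_iff_add_eq_zero.mpr (by rw [add_comm]; exact h.symm)
      _ = -((ξ ᵥ* ∑ i ∈ range (n + 1), c i • A ^ i) ⬝ᵥ x j) := by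
          simp only [vecMul_sum, vecMul_smul, sum_dotProduct, smul_dotProduct, smul_eq_mul,
            mul_neg, sum_neg_distrib]
      _ = 0 := by rw [hCH, vecMul_zero, zero_dotProduct, neg_zero]
  have he : ∀ p, e p = 0 := by
    refine eq_zero_of_backward_recurrence hmonic (K := D + n) (fun p hp => ?_) (hpe.eq_zero hker)
    simp only [e, extendedCoeffs, if_neg (show ¬p < n by omega), hη _ (show p - n ≥ D by omega)]
  constructor
  · refine hctrb.eq_zero_of_forall_vecMul_pow_mul_eq_zero fun q hq => ?_
    have h := he (n - 1 - q)
    rwa [show e (n - 1 - q) = ξ ᵥ* (A ^ q * B) by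
      simp only [e, extendedCoeffs, if_pos (show n - 1 - q < n by omega),
        show n - 1 - (n - 1 - q) = q by omega]] at h
  · ext k : 1
    simpa [e, extendedCoeffs] using he (k + n)

end StateSpace

theorem exists_shiftCombination_eq {n nu L D : ℕ} {A : Matrix (Fin n) (Fin n) ℝ}
    {B : Matrix (Fin n) (Fin nu) ℝ} (hctrb : IsControllable A B) {x : ℕ → Fin n → ℝ}
    {u : ℕ → Fin nu → ℝ} (hx : ∀ k < L, x (k + 1) = A *ᵥ x k + B *ᵥ u k) (hL : D + n ≤ L)
    (hpe : IsPersistentlyExciting nu (D + n) L u) (x₀ : Fin n → ℝ) (v : ℕ → Fin nu → ℝ) :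
    ∃ g : Fin (L - D + 1) → ℝ,
      shiftCombination g x 0 = x₀ ∧ ∀ k < D, shiftCombination g u k = v k := by
  set X : Matrix (Fin n) (Fin (L - D + 1)) ℝ := of fun i j => x j i
  have hrows : ∀ w, w ᵥ* fromRows X (hankelMatrix nu D L u) = 0 → w = 0 := by
    intro w hw
    set η : ℕ → Fin nu → ℝ := fun k r => if h : k < D then w (Sum.inr (⟨k, h⟩, r)) else 0
    have hwη : w ∘ Sum.inr = fun p : Fin D × Fin nu => η p.1.1 p.2 := by
      ext p
      simp [η]
    rw [vecMul_fromRows, hwη, vecMul_hankelMatrix] at hw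
    obtain ⟨hξ, hη⟩ := eq_zero_of_dotProduct_state_add_sum_eq_zero hctrb hx hL hpe
      (ξ := w ∘ Sum.inl) (η := η) (fun k hk => by ext r; simp [η, not_lt.mpr hk])
      (fun j hj => congrFun hw ⟨j, by omega⟩)
    ext (i | ⟨k, r⟩)
    · exact congrFun hξ i
    · simpa [η] using congrFun (congrFun hη k) r
  obtain ⟨g, hg⟩ := mulVec_surjective_of_vecMul_eq_zero hrows (Sum.elim x₀ fun p => v p.1 p.2)
  rw [fromRows_mulVec] at hg
  refine ⟨g, ?_, (hankelMatrix_mulVec_eq_iff u g v).mp (congrArg (· ∘ Sum.inr) hg)⟩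
  ext i
  simpa [X, shiftCombination, mulVec, dotProduct, mul_comm] using congrFun hg (Sum.inl i)

theorem willems_fundamental_lemma_general
    (n nu ny L D : ℕ) (hL : D + n ≤ L)
    (A : Matrix (Fin n) (Fin n) ℝ) (B : Matrix (Fin n) (Fin nu) ℝ)
    (C : Matrix (Fin ny) (Fin n) ℝ) (D₀ : Matrix (Fin ny) (Fin nu) ℝ)
    (hctrb : IsControllable A B)
    (uhat : ℕ → Fin nu → ℝ) (yhat : ℕ → Fin ny → ℝ)
    (htraj : IsTrajectory A B C D₀ L uhat yhat)
    (hpe : (hankelMatrix nu (D + n) L uhat).rank = nu * (D + n))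
    (util : ℕ → Fin nu → ℝ) (ytil : ℕ → Fin ny → ℝ) :
    IsTrajectory A B C D₀ D util ytil
    ↔ ∃ g : Fin (L - D + 1) → ℝ,
        (hankelMatrix nu D L uhat).mulVec g
          = (fun p : Fin D × Fin nu => util p.1.1 p.2) ∧
        (hankelMatrix ny D L yhat).mulVec g
          = (fun p : Fin D × Fin ny => ytil p.1.1 p.2) := by
  obtain ⟨xhat, hhat⟩ := htraj
  have hshift (g : Fin (L - D + 1) → ℝ) :=
    IsStateTrajectory.shiftCombination (D := D) hhat (by omega) g
  simp only [hankelMatrix_mulVec_eq_iff]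
  constructor
  · rintro ⟨xtil, htil⟩
    obtain ⟨g, hg₀, hgu⟩ := exists_shiftCombination_eq hctrb (fun k hk => (hhat k hk).1) hL hpe
      (xtil 0) util
    exact ⟨g, hgu, (hshift g).output_eq htil hg₀ hgu⟩
  · rintro ⟨g, hgu, hgy⟩
    refine ⟨shiftCombination g xhat, fun k hk => ?_⟩
    rw [← hgu k hk, ← hgy k hk]
    exact hshift g k hk

/-- **Willems' fundamental lemma.** For a controllable LTI system, if
`(û, ŷ)` is a length-`L` trajectory whose input is persistently exciting of
order `D + n`, then `(ũ, ỹ)` is a length-`D` trajectory of the system if and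
only if `col(ũ) , col(ỹ)` lie in the column span of the depth-`D` Hankel
matrices of `û , ŷ` with a common coefficient vector `g`. -/
theorem willems_fundamental_lemma
    (n nu ny L D : ℕ) (hnu : 1 ≤ nu) (hD : 1 ≤ D) (hL : D + n ≤ L)
    (A : Matrix (Fin n) (Fin n) ℝ) (B : Matrix (Fin n) (Fin nu) ℝ)
    (C : Matrix (Fin ny) (Fin n) ℝ) (D₀ : Matrix (Fin ny) (Fin nu) ℝ)
    (hctrb : IsControllable A B)
    (uhat : ℕ → Fin nu → ℝ) (yhat : ℕ → Fin ny → ℝ)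
    (htraj : IsTrajectory A B C D₀ L uhat yhat)
    (hpe : (hankelMatrix nu (D + n) L uhat).rank = nu * (D + n))
    (util : ℕ → Fin nu → ℝ) (ytil : ℕ → Fin ny → ℝ) :
    IsTrajectory A B C D₀ D util ytil
    ↔ ∃ g : Fin (L - D + 1) → ℝ,
        (hankelMatrix nu D L uhat).mulVec g
          = (fun p : Fin D × Fin nu => util p.1.1 p.2) ∧
        (hankelMatrix ny D L yhat).mulVec g
          = (fun p : Fin D × Fin ny => ytil p.1.1 p.2) :=
  willems_fundamental_lemma_general n nu ny L D hL A B C D₀ hctrb uhat yhat htraj hpe util ytil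
end
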